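/- Let P be a dynamic path instance with n ≥ 1, w_0 ≥ 1 and w_n ≥ 1, and let x* be the unique minimizer of Θ(P,·) on [x_0, x_n]. The set { i : 0 ≤ i ≤ n and Θ_L(P,x_i) < Θ_R(P,x_i) } is nonempty and contained in {0, …, n−1}; let t be its maximum. Define Θ_L⁺ = Θ_L(P,x_{t+1}) − τ·(x_{t+1} − x_t) and Θ_R⁻ = Θ_R(P,x_t) − τ·(x_{t+1} − x_t). Then: (i) if Θ_L⁺ ≥ Θ_R(P,x_t) then x* = x_t; (ii) if Θ_L⁺ < Θ_R(P,x_t) and Θ_L(P,x_{t+1}) > Θ_R⁻, then x* = (x_t + x_{t+1})/2 + (Θ_R(P,x_t) − Θ_L(P,x_{t+1}))/(2τ), and this x* is the unique point of (x_t, x_{t+1}) at which Θ_L(P,x*) = Θ_R(P,x*); (iii) if Θ_L(P,x_{t+1}) ≤ Θ_R⁻ then x* = x_{t+1}. -/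

import Mathlib

/-!
`Θ_L(P, ·)` increases with slope at least `τ` on `[x_0, x_n]` and with slope exactly `τ` on each
cell `(x_t, x_{t+1}]`, since the capacities seen by a left group do not change inside a cell;
symmetrically `Θ_R(P, ·)` decreases with slope at least `τ`, exactly `τ` on `[x_t, x_{t+1})`.
Hence `Θ_L` lies above the line of slope `τ` through `(x_{t+1}, Θ_L(x_{t+1}))` to the right of
`x_t`, and `Θ_R` above the line of slope `-τ` through `(x_t, Θ_R(x_t))` to the left of
`x_{t+1}`, with equality inside the cell. Since `Θ_L < Θ_R` at `x_t` and `Θ_L ≥ Θ_R` at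
`x_{t+1}`, the unique minimizer of `max Θ_L Θ_R` is the crossing point of these two lines, clipped
to `[x_t, x_{t+1}]`.
-/

/-- A dynamic path instance: `n+1` vertices at strictly increasing coordinates
`x 0 < x 1 < ⋯ < x n`, natural-number weights `w i`, positive integer capacities
`c j` (capacity of the edge from `x (j-1)` to `x j`, for `1 ≤ j ≤ n`), and a
positive travel time `τ` per unit distance. -/
structure DPath where
  n : ℕ
  x : ℕ → ℝ
  w : ℕ → ℕ
  c : ℕ → ℕ
  τ : ℝ
  hx : ∀ i, i < n → x i < x (i + 1)
  hc : ∀ j, 1 ≤ j → j ≤ n → 0 < c j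
  hτ : 0 < τ

/-- `P.W a i = w_a + ⋯ + w_i`. -/
def DPath.W (P : DPath) (a i : ℕ) : ℕ := ∑ j ∈ Finset.Icc a i, P.w j

/-- For a sink at `y` in subpath `P_{a,b}`: the minimum capacity
`min_{i+1 ≤ j ≤ k+1} c_j`, where `k` is the index with `x_k < y ≤ x_{k+1}`;
the edges `j` with `i+1 ≤ j ≤ k+1` are exactly those with `i+1 ≤ j ≤ b` and
`x (j-1) < y`. -/
noncomputable def DPath.cL (P : DPath) (b : ℕ) (y : ℝ) (i : ℕ) : ℕ :=
  sInf (P.c '' {j | i + 1 ≤ j ∧ j ≤ b ∧ P.x (j - 1) < y})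

/-- For a sink at `y` in subpath `P_{a,b}`: the minimum capacity
`min_{k+1 ≤ j ≤ i} c_j`, where `k` is the index with `x_k ≤ y < x_{k+1}`;
the edges `j` with `k+1 ≤ j ≤ i` are exactly those with `a+1 ≤ j ≤ i` and
`y < x j`. -/
noncomputable def DPath.cR (P : DPath) (a : ℕ) (y : ℝ) (i : ℕ) : ℕ :=
  sInf (P.c '' {j | a + 1 ≤ j ∧ j ≤ i ∧ y < P.x j})

/-- Left evacuation time `Θ_L(P_{a,b}, y)`: the maximum, over indices `i` with
`a ≤ i ≤ b`, `x i < y` and `W_{a,i} ≥ 1`, of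
`(y − x_i)·τ + ⌈W_{a,i} / min_{i+1 ≤ j ≤ k+1} c_j⌉ − 1`; it is `0` if no such
index exists. -/
noncomputable def ThetaL (P : DPath) (a b : ℕ) (y : ℝ) : ℝ :=
  sSup (insert 0 {t : ℝ | ∃ i, a ≤ i ∧ i ≤ b ∧ P.x i < y ∧ 1 ≤ P.W a i ∧
    t = (y - P.x i) * P.τ + (⌈(P.W a i : ℝ) / (P.cL b y i : ℝ)⌉ : ℝ) - 1})

/-- Right evacuation time `Θ_R(P_{a,b}, y)`. -/
noncomputable def ThetaR (P : DPath) (a b : ℕ) (y : ℝ) : ℝ :=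
  sSup (insert 0 {t : ℝ | ∃ i, a ≤ i ∧ i ≤ b ∧ y < P.x i ∧ 1 ≤ P.W i b ∧
    t = (P.x i - y) * P.τ + (⌈(P.W i b : ℝ) / (P.cR a y i : ℝ)⌉ : ℝ) - 1})

/-- Evacuation time of subpath `P_{a,b}` to sink `y`. -/
noncomputable def Theta (P : DPath) (a b : ℕ) (y : ℝ) : ℝ :=
  max (ThetaL P a b y) (ThetaR P a b y)

/-- `Θ¹(P_{a,b})`: minimum 1-sink evacuation time of subpath `P_{a,b}`
over sinks `y ∈ [x_a, x_b]`. -/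
noncomputable def Theta1 (P : DPath) (a b : ℕ) : ℝ :=
  sInf (Theta P a b '' Set.Icc (P.x a) (P.x b))

/-- `Θᵏ(P_{a,b})`: minimum over all partitions of `{a, …, b}` into at most `k`
nonempty intervals `[f j, f (j+1) - 1]`, of the maximum over the intervals of
`Θ¹`. -/
noncomputable def ThetaK (P : DPath) (k a b : ℕ) : ℝ :=
  sInf {t : ℝ | ∃ (m : ℕ) (f : ℕ → ℕ), 1 ≤ m ∧ m ≤ k ∧
    f 0 = a ∧ f m = b + 1 ∧ (∀ j, j < m → f j < f (j + 1)) ∧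
    t = ⨆ j : Fin m, Theta1 P (f j.val) (f (j.val + 1) - 1)}

open Set

namespace DPath

variable (P : DPath)

/-- The time at which the last of the evacuees `w_a, …, w_i`, who travel together from `x_i`
through the edges `i+1, …, k+1` of `P_{a,b}`, reaches the sink `y`. -/
noncomputable def arrivalL (a b : ℕ) (y : ℝ) (i : ℕ) : ℝ :=
  (y - P.x i) * P.τ + (⌈(P.W a i : ℝ) / (P.cL b y i : ℝ)⌉ : ℝ) - 1

noncomputable def arrivalR (a b : ℕ) (y : ℝ) (i : ℕ) : ℝ :=
  (P.x i - y) * P.τ + (⌈(P.W i b : ℝ) / (P.cR a y i : ℝ)⌉ : ℝ) - 1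

theorem x_strictMonoOn : StrictMonoOn P.x (Iic P.n) :=
  strictMonoOn_Iic_of_lt_succ P.hx

variable {P}

theorem x_lt_x_iff {i j : ℕ} (hi : i ≤ P.n) (hj : j ≤ P.n) : P.x i < P.x j ↔ i < j :=
  P.x_strictMonoOn.lt_iff_lt hi hj

theorem x_le_x_of_le {i j : ℕ} (hij : i ≤ j) (hj : j ≤ P.n) : P.x i ≤ P.x j :=
  (P.x_strictMonoOn.le_iff_le (hij.trans hj) hj).2 hij

theorem one_le_W_of_left {a i : ℕ} (hai : a ≤ i) (hw : 1 ≤ P.w a) : 1 ≤ P.W a i :=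
  hw.trans <| Finset.single_le_sum (fun _ _ => Nat.zero_le _) (Finset.left_mem_Icc.2 hai)

theorem one_le_W_of_right {i b : ℕ} (hib : i ≤ b) (hw : 1 ≤ P.w b) : 1 ≤ P.W i b :=
  hw.trans <| Finset.single_le_sum (fun _ _ => Nat.zero_le _) (Finset.right_mem_Icc.2 hib)

theorem sInf_image_c_pos {s : Set ℕ} (hs : s.Nonempty) (h : ∀ j ∈ s, 1 ≤ j ∧ j ≤ P.n) :
    0 < sInf (P.c '' s) := by
  obtain ⟨j, hj, hcj⟩ := Nat.sInf_mem (hs.image P.c)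
  rw [← hcj]
  exact P.hc j (h j hj).1 (h j hj).2

theorem one_le_ceil_div {W d : ℕ} (hW : 1 ≤ W) (hd : 0 < d) : (1 : ℝ) ≤ (⌈(W : ℝ) / d⌉ : ℝ) := by
  exact_mod_cast Int.one_le_ceil_iff.2 (by positivity)

theorem ceil_div_le_ceil_div {W d d' : ℕ} (hd' : 0 < d') (hdd : d' ≤ d) :
    (⌈(W : ℝ) / d⌉ : ℝ) ≤ (⌈(W : ℝ) / d'⌉ : ℝ) := by
  exact_mod_cast Int.ceil_le_ceil <|
    div_le_div_of_nonneg_left (Nat.cast_nonneg _) (Nat.cast_pos.2 hd') (Nat.cast_le.2 hdd)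

section Left

variable {a b i t : ℕ} {y y' : ℝ}

theorem cL_pos (hb : b ≤ P.n) (hib : i < b) (hy : P.x i < y) : 0 < P.cL b y i :=
  sInf_image_c_pos ⟨i + 1, le_rfl, hib, by simpa using hy⟩ fun j hj =>
    ⟨(Nat.le_add_left 1 i).trans hj.1, hj.2.1.trans hb⟩

theorem cL_anti (hib : i < b) (hy : P.x i < y) (hyy : y ≤ y') : P.cL b y' i ≤ P.cL b y i :=
  csInf_le_csInf (OrderBot.bddBelow _)
    (Set.Nonempty.image _ ⟨i + 1, le_rfl, hib, by simpa using hy⟩)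
    (image_mono fun _ hj => ⟨hj.1, hj.2.1, hj.2.2.trans_le hyy⟩)

theorem cL_eq_of_mem_Ioc (hb : b ≤ P.n) (htb : t < b) (hty : P.x t < y) (hyy : y ≤ y')
    (hy' : y' ≤ P.x (t + 1)) : P.cL b y' i = P.cL b y i := by
  unfold cL
  congr 2
  ext j
  refine and_congr_right fun _ => and_congr_right fun hjb =>
    ⟨fun hj => ?_, fun hj => hj.trans_le hyy⟩
  have hjt : j - 1 ≤ t :=
    Nat.lt_succ_iff.1 ((x_lt_x_iff (by omega) (by omega)).1 (hj.trans_le hy'))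
  exact (x_le_x_of_le hjt (by omega)).trans_lt hty

theorem arrivalL_add_le (hb : b ≤ P.n) (hib : i < b) (hy : P.x i < y) (hyy : y ≤ y') :
    P.arrivalL a b y i + P.τ * (y' - y) ≤ P.arrivalL a b y' i := by
  have := ceil_div_le_ceil_div (W := P.W a i) (cL_pos hb hib (hy.trans_le hyy))
    (cL_anti hib hy hyy)
  unfold arrivalL
  linarith

theorem mul_sub_le_arrivalL (hb : b ≤ P.n) (hib : i < b) (hy : P.x i < y) (hW : 1 ≤ P.W a i) :
    P.τ * (y - P.x i) ≤ P.arrivalL a b y i := by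
  have := one_le_ceil_div hW (cL_pos hb hib hy)
  unfold arrivalL
  linarith

end Left

section Right

variable {a b i t : ℕ} {y y' : ℝ}

theorem cR_pos (hb : b ≤ P.n) (hai : a ≤ i) (hib : i ≤ b) (ha : P.x a ≤ y) (hy : y < P.x i) :
    0 < P.cR a y i := by
  have hai' : a + 1 ≤ i := Nat.succ_le_of_lt (hai.lt_of_ne (by rintro rfl; linarith))
  exact sInf_image_c_pos ⟨i, hai', le_rfl, hy⟩ fun j hj =>
    ⟨(Nat.le_add_left 1 a).trans hj.1, hj.2.1.trans (hib.trans hb)⟩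

theorem cR_anti (hai : a ≤ i) (ha : P.x a ≤ y) (hyy : y ≤ y') (hy' : y' < P.x i) :
    P.cR a y i ≤ P.cR a y' i := by
  have hai' : a + 1 ≤ i := Nat.succ_le_of_lt (hai.lt_of_ne (by rintro rfl; linarith))
  exact csInf_le_csInf (OrderBot.bddBelow _) (Set.Nonempty.image _ ⟨i, hai', le_rfl, hy'⟩)
    (image_mono fun _ hj => ⟨hj.1, hj.2.1, hyy.trans_lt hj.2.2⟩)

theorem cR_eq_of_mem_Ico (hb : b ≤ P.n) (hib : i ≤ b) (htb : t < b) (hty : P.x t ≤ y)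
    (hyy : y ≤ y') (hy' : y' < P.x (t + 1)) : P.cR a y i = P.cR a y' i := by
  unfold cR
  congr 2
  ext j
  refine and_congr_right fun _ => and_congr_right fun hji =>
    ⟨fun hj => ?_, fun hj => hyy.trans_lt hj⟩
  have htj : t + 1 ≤ j := (x_lt_x_iff (by omega) (by omega)).1 (hty.trans_lt hj)
  exact hy'.trans_le (x_le_x_of_le htj (by omega))

theorem arrivalR_add_le (hb : b ≤ P.n) (hai : a ≤ i) (hib : i ≤ b) (ha : P.x a ≤ y)
    (hyy : y ≤ y') (hy' : y' < P.x i) :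
    P.arrivalR a b y' i + P.τ * (y' - y) ≤ P.arrivalR a b y i := by
  have := ceil_div_le_ceil_div (W := P.W i b) (cR_pos hb hai hib ha (hyy.trans_lt hy'))
    (cR_anti hai ha hyy hy')
  unfold arrivalR
  linarith

theorem mul_sub_le_arrivalR (hb : b ≤ P.n) (hai : a ≤ i) (hib : i ≤ b) (ha : P.x a ≤ y)
    (hy : y < P.x i) (hW : 1 ≤ P.W i b) : P.τ * (P.x i - y) ≤ P.arrivalR a b y i := by
  have := one_le_ceil_div hW (cR_pos hb hai hib ha hy)
  unfold arrivalR
  linarith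

end Right

theorem bddAbove_insert_zero {a b : ℕ} (Q R : ℕ → Prop) (F : ℕ → ℝ) :
    BddAbove (insert 0 {t : ℝ | ∃ i, a ≤ i ∧ i ≤ b ∧ Q i ∧ R i ∧ t = F i}) :=
  (((finite_Iic b).image F).subset (by rintro _ ⟨i, -, hi, -, -, rfl⟩; exact ⟨i, hi, rfl⟩)).insert 0
    |>.bddAbove

end DPath

open DPath

section Evacuation

variable {P : DPath} {a b i t : ℕ} {y y' m : ℝ}

theorem ThetaL_nonneg : 0 ≤ ThetaL P a b y :=
  le_csSup (bddAbove_insert_zero _ _ _) (mem_insert _ _)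

theorem ThetaR_nonneg : 0 ≤ ThetaR P a b y :=
  le_csSup (bddAbove_insert_zero _ _ _) (mem_insert _ _)

theorem arrivalL_le_ThetaL (hai : a ≤ i) (hib : i ≤ b) (hy : P.x i < y) (hW : 1 ≤ P.W a i) :
    P.arrivalL a b y i ≤ ThetaL P a b y :=
  le_csSup (bddAbove_insert_zero _ _ _) (mem_insert_of_mem _ ⟨i, hai, hib, hy, hW, rfl⟩)

theorem arrivalR_le_ThetaR (hai : a ≤ i) (hib : i ≤ b) (hy : y < P.x i) (hW : 1 ≤ P.W i b) :
    P.arrivalR a b y i ≤ ThetaR P a b y :=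
  le_csSup (bddAbove_insert_zero _ _ _) (mem_insert_of_mem _ ⟨i, hai, hib, hy, hW, rfl⟩)

theorem ThetaL_le (hm : 0 ≤ m)
    (h : ∀ i, a ≤ i → i ≤ b → P.x i < y → 1 ≤ P.W a i → P.arrivalL a b y i ≤ m) :
    ThetaL P a b y ≤ m :=
  csSup_le (insert_nonempty _ _) <| by
    rintro _ (rfl | ⟨i, hai, hib, hy, hW, rfl⟩)
    exacts [hm, h i hai hib hy hW]

theorem ThetaR_le (hm : 0 ≤ m)
    (h : ∀ i, a ≤ i → i ≤ b → y < P.x i → 1 ≤ P.W i b → P.arrivalR a b y i ≤ m) :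
    ThetaR P a b y ≤ m :=
  csSup_le (insert_nonempty _ _) <| by
    rintro _ (rfl | ⟨i, hai, hib, hy, hW, rfl⟩)
    exacts [hm, h i hai hib hy hW]

theorem ThetaL_left_eq_zero (hb : b ≤ P.n) : ThetaL P a b (P.x a) = 0 :=
  le_antisymm
    (ThetaL_le le_rfl fun _ hai hib hy _ => absurd hy (not_lt.2 (x_le_x_of_le hai (hib.trans hb))))
    ThetaL_nonneg

theorem ThetaR_right_eq_zero (hb : b ≤ P.n) : ThetaR P a b (P.x b) = 0 :=
  le_antisymm (ThetaR_le le_rfl fun _ _ hib hy _ => absurd hy (not_lt.2 (x_le_x_of_le hib hb)))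
    ThetaR_nonneg

theorem mul_sub_le_ThetaL (hab : a ≤ b) (hb : b ≤ P.n) (hwa : 1 ≤ P.w a) (ha : P.x a < y)
    (hy : y ≤ P.x b) : P.τ * (y - P.x a) ≤ ThetaL P a b y := by
  have hab' : a < b := (x_lt_x_iff (hab.trans hb) hb).1 (ha.trans_le hy)
  have hW := one_le_W_of_left le_rfl hwa
  exact (mul_sub_le_arrivalL hb hab' ha hW).trans (arrivalL_le_ThetaL le_rfl hab ha hW)

theorem mul_sub_le_ThetaR (hab : a ≤ b) (hb : b ≤ P.n) (hwb : 1 ≤ P.w b) (ha : P.x a ≤ y)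
    (hy : y < P.x b) : P.τ * (P.x b - y) ≤ ThetaR P a b y := by
  have hW := one_le_W_of_right le_rfl hwb
  exact (mul_sub_le_arrivalR hb hab le_rfl ha hy hW).trans (arrivalR_le_ThetaR hab le_rfl hy hW)

theorem ThetaL_add_le (hab : a ≤ b) (hb : b ≤ P.n) (hwa : 1 ≤ P.w a) (ha : P.x a ≤ y)
    (hyy : y ≤ y') (hy' : y' ≤ P.x b) : ThetaL P a b y + P.τ * (y' - y) ≤ ThetaL P a b y' := by
  rcases hyy.eq_or_lt with rfl | hlt
  · simp
  suffices ThetaL P a b y ≤ ThetaL P a b y' - P.τ * (y' - y) by linarith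
  apply ThetaL_le
  · have := mul_sub_le_ThetaL hab hb hwa (ha.trans_lt hlt) hy'
    nlinarith [P.hτ]
  intro i hai hib hy hW
  have hib' : i < b := (x_lt_x_iff (hib.trans hb) hb).1 (hy.trans_le (hyy.trans hy'))
  linarith [arrivalL_add_le (a := a) hb hib' hy hyy, arrivalL_le_ThetaL hai hib (hy.trans hlt) hW]

theorem ThetaR_add_le (hab : a ≤ b) (hb : b ≤ P.n) (hwb : 1 ≤ P.w b) (ha : P.x a ≤ y)
    (hyy : y ≤ y') (hy' : y' ≤ P.x b) : ThetaR P a b y' + P.τ * (y' - y) ≤ ThetaR P a b y := by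
  rcases hyy.eq_or_lt with rfl | hlt
  · simp
  suffices ThetaR P a b y' ≤ ThetaR P a b y - P.τ * (y' - y) by linarith
  apply ThetaR_le
  · have := mul_sub_le_ThetaR hab hb hwb ha (hlt.trans_le hy')
    nlinarith [P.hτ]
  intro i hai hib hy hW
  linarith [arrivalR_add_le hb hai hib ha hyy hy, arrivalR_le_ThetaR hai hib (hlt.trans hy) hW]

theorem ThetaL_le_add_of_mem_Ioc (hb : b ≤ P.n) (htb : t < b) (hty : P.x t < y)
    (hy : y ≤ P.x (t + 1)) :
    ThetaL P a b (P.x (t + 1)) ≤ ThetaL P a b y + P.τ * (P.x (t + 1) - y) := by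
  apply ThetaL_le (add_nonneg ThetaL_nonneg (mul_nonneg P.hτ.le (sub_nonneg.2 hy)))
  intro i hai hib hi hW
  have hit : i ≤ t := Nat.lt_succ_iff.1 ((x_lt_x_iff (hib.trans hb) (by omega)).1 hi)
  have hiy : P.x i < y := (x_le_x_of_le hit (by omega)).trans_lt hty
  have hcell : P.arrivalL a b (P.x (t + 1)) i = P.arrivalL a b y i + P.τ * (P.x (t + 1) - y) := by
    rw [arrivalL, arrivalL, cL_eq_of_mem_Ioc hb htb hty hy le_rfl]
    ring
  linarith [arrivalL_le_ThetaL hai hib hiy hW]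

theorem ThetaR_le_add_of_mem_Ico (hb : b ≤ P.n) (htb : t < b) (hty : P.x t ≤ y)
    (hy : y < P.x (t + 1)) : ThetaR P a b (P.x t) ≤ ThetaR P a b y + P.τ * (y - P.x t) := by
  apply ThetaR_le (add_nonneg ThetaR_nonneg (mul_nonneg P.hτ.le (sub_nonneg.2 hty)))
  intro i hai hib hi hW
  have hti : t + 1 ≤ i := (x_lt_x_iff (by omega) (hib.trans hb)).1 hi
  have hyi : y < P.x i := hy.trans_le (x_le_x_of_le hti (hib.trans hb))
  have hcell : P.arrivalR a b (P.x t) i = P.arrivalR a b y i + P.τ * (y - P.x t) := by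
    rw [arrivalR, arrivalR, cR_eq_of_mem_Ico hb hib htb le_rfl hty hy]
    ring
  linarith [arrivalR_le_ThetaR hai hib hyi hW]

theorem ThetaL_x_succ_sub_le (hb : b ≤ P.n) (hwa : 1 ≤ P.w a) (hat : a ≤ t) (htb : t < b)
    (hty : P.x t < y) (hy : y ≤ P.x b) :
    ThetaL P a b (P.x (t + 1)) - P.τ * (P.x (t + 1) - y) ≤ ThetaL P a b y := by
  rcases le_or_gt y (P.x (t + 1)) with hyt | hty'
  · linarith [ThetaL_le_add_of_mem_Ioc (a := a) hb htb hty hyt]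
  · have hax : P.x a ≤ P.x (t + 1) := x_le_x_of_le (by omega) (by omega)
    linarith [ThetaL_add_le (by omega) hb hwa hax hty'.le hy]

theorem ThetaR_x_sub_le (hb : b ≤ P.n) (hwb : 1 ≤ P.w b) (hab : a ≤ b) (htb : t < b)
    (hay : P.x a ≤ y) (hyt : y < P.x (t + 1)) :
    ThetaR P a b (P.x t) - P.τ * (y - P.x t) ≤ ThetaR P a b y := by
  rcases le_or_gt (P.x t) y with hty | hyt'
  · linarith [ThetaR_le_add_of_mem_Ico (a := a) hb htb hty hyt]
  · have hxb : P.x t ≤ P.x b := x_le_x_of_le htb.le hb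
    linarith [ThetaR_add_le hab hb hwb hay hyt'.le hxb]

end Evacuation

theorem eq_of_isMinOn_max {α β : Type*} [LinearOrder α] [LinearOrder β] {s : Set α}
    {f g ℓ r : α → β} {p q z xs : α}
    (hℓ : StrictMono ℓ) (hr : StrictAnti r)
    (hf : ∀ y ∈ s, p < y → ℓ y ≤ f y) (hg : ∀ y ∈ s, y < q → r y ≤ g y)
    (hz : z ∈ s) (hpz : p ≤ z) (hzq : z ≤ q)
    (hzℓ : max (f z) (g z) ≤ ℓ z) (hzr : max (f z) (g z) ≤ r z)
    (hxs : xs ∈ s) (hmin : IsMinOn (fun y => max (f y) (g y)) s xs) : xs = z := by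
  have hle : max (f xs) (g xs) ≤ max (f z) (g z) := isMinOn_iff.1 hmin z hz
  by_contra hne
  rcases lt_or_gt_of_ne hne with hlt | hgt
  · have hgxs : r z < g xs := (hr hlt).trans_le (hg xs hxs (hlt.trans_le hzq))
    exact hle.not_gt (hzr.trans_lt (hgxs.trans_le (le_max_right _ _)))
  · have hfxs : ℓ z < f xs := (hℓ hgt).trans_le (hf xs hxs (hpz.trans_lt hgt))
    exact hle.not_gt (hzℓ.trans_lt (hfxs.trans_le (le_max_left _ _)))

theorem isMinOn_max_cases {s : Set ℝ} [s.OrdConnected] {f g : ℝ → ℝ} {p q τ xs : ℝ}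
    (hτ : 0 < τ) (hpq : p ≤ q) (hp : p ∈ s) (hq : q ∈ s)
    (hf_le : ∀ y ∈ s, y ≤ q → f y ≤ f q - τ * (q - y))
    (hf_ge : ∀ y ∈ s, p < y → f q - τ * (q - y) ≤ f y)
    (hg_le : ∀ y ∈ s, p ≤ y → g y ≤ g p - τ * (y - p))
    (hg_ge : ∀ y ∈ s, y < q → g p - τ * (y - p) ≤ g y)
    (hfgp : f p ≤ g p) (hgfq : g q ≤ f q)
    (hxs : xs ∈ s) (hmin : IsMinOn (fun y => max (f y) (g y)) s xs) :
    (f q - τ * (q - p) ≥ g p → xs = p) ∧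
    (f q - τ * (q - p) < g p → g p - τ * (q - p) < f q →
      xs = (p + q) / 2 + (g p - f q) / (2 * τ) ∧ p < xs ∧ xs < q ∧ f xs = g xs ∧
      ∀ z, p < z → z < q → f z = g z → z = xs) ∧
    (f q ≤ g p - τ * (q - p) → xs = q) := by
  have key : ∀ z ∈ s, p ≤ z → z ≤ q → max (f z) (g z) ≤ f q - τ * (q - z) →
      max (f z) (g z) ≤ g p - τ * (z - p) → xs = z := fun z hz hpz hzq hzℓ hzr =>
    eq_of_isMinOn_max (ℓ := fun y => f q - τ * (q - y)) (r := fun y => g p - τ * (y - p))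
      (fun a b h => by dsimp only; gcongr) (fun a b h => by dsimp only; gcongr)
      hf_ge hg_ge hz hpz hzq hzℓ hzr hxs hmin
  have hcross : ∀ y, f q - τ * (q - y) = g p - τ * (y - p) ↔
      y = (p + q) / 2 + (g p - f q) / (2 * τ) := fun y => by
    constructor <;> intro h
    · field_simp
      linarith
    · rw [h]
      field_simp
      ring
  have hlines : ∀ y, p < y → y < q → f y = f q - τ * (q - y) ∧ g y = g p - τ * (y - p) :=
    fun y hpy hyq =>
      have hy : y ∈ s := Set.OrdConnected.out' hp hq ⟨hpy.le, hyq.le⟩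
      ⟨(hf_le y hy hyq.le).antisymm (hf_ge y hy hpy),
        (hg_le y hy hpy.le).antisymm (hg_ge y hy hyq)⟩
  refine ⟨fun h => key p hp le_rfl hpq (max_le (hf_le p hp hpq) h) (by simpa using hfgp),
    fun h₁ h₂ => ?_, fun h => key q hq hpq le_rfl (by simpa using hgfq) (max_le h (hg_le q hq hpq))⟩
  set z := (p + q) / 2 + (g p - f q) / (2 * τ)
  have hz : z * (2 * τ) = (p + q) * τ + (g p - f q) := by simp only [z]; field_simp
  have hpz : p < z := by nlinarith
  have hzq : z < q := by nlinarith
  obtain ⟨hfz, hgz⟩ := hlines z hpz hzq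
  have hfgz : f z = g z := by rw [hfz, hgz, hcross]
  have hxs_eq : xs = z := key z (Set.OrdConnected.out' hp hq ⟨hpz.le, hzq.le⟩) hpz.le hzq.le
    (by rw [← hfz, ← hfgz, max_self]) (by rw [← hgz, hfgz, max_self])
  subst hxs_eq
  refine ⟨rfl, hpz, hzq, hfgz, fun y hpy hyq hfgy => ?_⟩
  obtain ⟨hfy, hgy⟩ := hlines y hpy hyq
  rwa [hfy, hgy, hcross] at hfgy

/-- locating the unique minimizer `x*` from
`t = max { i ≤ n : Θ_L(P,x_i) < Θ_R(P,x_i) }` via the three cases. -/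
theorem stmt8 (P : DPath) (hn : 1 ≤ P.n) (hw0 : 1 ≤ P.w 0) (hwn : 1 ≤ P.w P.n)
    (xs : ℝ) (hxs : xs ∈ Set.Icc (P.x 0) (P.x P.n))
    (hmin : ∀ y ∈ Set.Icc (P.x 0) (P.x P.n), Theta P 0 P.n xs ≤ Theta P 0 P.n y) :
    -- the set { i ≤ n : Θ_L(P,x_i) < Θ_R(P,x_i) } is nonempty
    (∃ i, i ≤ P.n ∧ ThetaL P 0 P.n (P.x i) < ThetaR P 0 P.n (P.x i)) ∧
    -- and contained in {0, …, n−1}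
    (∀ i, i ≤ P.n → ThetaL P 0 P.n (P.x i) < ThetaR P 0 P.n (P.x i) → i < P.n) ∧
    -- and for t its maximum, the three cases hold:
    (∀ t, t ≤ P.n → ThetaL P 0 P.n (P.x t) < ThetaR P 0 P.n (P.x t) →
      (∀ i, i ≤ P.n → ThetaL P 0 P.n (P.x i) < ThetaR P 0 P.n (P.x i) → i ≤ t) →
      -- (i)
      ((ThetaL P 0 P.n (P.x (t + 1)) - P.τ * (P.x (t + 1) - P.x t) ≥
          ThetaR P 0 P.n (P.x t) → xs = P.x t) ∧
      -- (ii)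
      (ThetaL P 0 P.n (P.x (t + 1)) - P.τ * (P.x (t + 1) - P.x t) <
          ThetaR P 0 P.n (P.x t) →
        ThetaR P 0 P.n (P.x t) - P.τ * (P.x (t + 1) - P.x t) <
          ThetaL P 0 P.n (P.x (t + 1)) →
        xs = (P.x t + P.x (t + 1)) / 2 +
              (ThetaR P 0 P.n (P.x t) - ThetaL P 0 P.n (P.x (t + 1))) / (2 * P.τ) ∧
        P.x t < xs ∧ xs < P.x (t + 1) ∧
        ThetaL P 0 P.n xs = ThetaR P 0 P.n xs ∧
        (∀ z, P.x t < z → z < P.x (t + 1) →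
          ThetaL P 0 P.n z = ThetaR P 0 P.n z → z = xs)) ∧
      -- (iii)
      (ThetaL P 0 P.n (P.x (t + 1)) ≤
          ThetaR P 0 P.n (P.x t) - P.τ * (P.x (t + 1) - P.x t) →
        xs = P.x (t + 1)))) := by
  have hlast : ∀ i, i ≤ P.n → ThetaL P 0 P.n (P.x i) < ThetaR P 0 P.n (P.x i) → i < P.n := by
    rintro i hi hlt
    refine hi.lt_of_ne ?_
    rintro rfl
    rw [ThetaR_right_eq_zero le_rfl] at hlt
    exact hlt.not_ge ThetaL_nonneg
  have hx0n : P.x 0 < P.x P.n := (x_lt_x_iff (Nat.zero_le _) le_rfl).2 hn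
  refine ⟨⟨0, Nat.zero_le _, ?_⟩, hlast, fun t ht htlt htmax => ?_⟩
  · rw [ThetaL_left_eq_zero le_rfl]
    exact (mul_pos P.hτ (sub_pos.2 hx0n)).trans_le
      (mul_sub_le_ThetaR (Nat.zero_le _) le_rfl hwn le_rfl hx0n)
  have htn : t < P.n := hlast t ht htlt
  have hgfq : ThetaR P 0 P.n (P.x (t + 1)) ≤ ThetaL P 0 P.n (P.x (t + 1)) :=
    not_lt.1 fun h => (htmax (t + 1) htn h).not_gt (Nat.lt_succ_self t)
  have hp : P.x t ∈ Set.Icc (P.x 0) (P.x P.n) :=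
    ⟨x_le_x_of_le (Nat.zero_le _) ht, x_le_x_of_le ht le_rfl⟩
  have hq : P.x (t + 1) ∈ Set.Icc (P.x 0) (P.x P.n) :=
    ⟨x_le_x_of_le (Nat.zero_le _) htn, x_le_x_of_le htn le_rfl⟩
  exact isMinOn_max_cases P.hτ (P.hx t htn).le hp hq
    (fun y hy hyq => by linarith [ThetaL_add_le (Nat.zero_le _) le_rfl hw0 hy.1 hyq hq.2])
    (fun y hy hpy => ThetaL_x_succ_sub_le le_rfl hw0 (Nat.zero_le _) htn hpy hy.2)
    (fun y hy hpy => by linarith [ThetaR_add_le (Nat.zero_le _) le_rfl hwn hp.1 hpy hy.2])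
    (fun y hy hyq => ThetaR_x_sub_le le_rfl hwn (Nat.zero_le _) htn hy.1 hyq)
    htlt.le hgfq hxs (isMinOn_iff.2 hmin)
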